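/- Let Θ ⊆ ℝ^{d_β} × ℝ^{d_π} be closed, π_0 ∈ ℝ^{d_π}, and let B^W = {β : (β, π_0) ∈ Θ}. Suppose B^W equals the closure of {β : (β, π_0) ∈ int(Θ)}. Let π_n → π_0 with √n(π_n − π_0) bounded (or more generally π_n any sequence with π_n → π_0). Then the sets Λ_n^W = {(β, √n(π − π_n)) : (β, π) ∈ Θ} converge in the Painlevé–Kuratowski sense to B^W × ℝ^{d_π}. -/

import Mathlib

/-! Undoing the scaling, `(b, w) ∈ Λ_n^W` iff `(b, π_n + w / √n) ∈ Θ` (for `n ≠ 0`), and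
`π_n + w / √n → π₀` locally uniformly in `w`. Hence a point `(β, v)` with `(β, π₀) ∉ Θ` has a
neighbourhood missed by all late `Λ_n^W`, as `Θ` is closed; while a point with `(β, π₀) ∈ int Θ`
lies in every late `Λ_n^W`. The PK liminf is always closed, so it then contains the closure of
`{β : (β, π₀) ∈ int Θ} × ℝ^{d_π}`, which is `B^W × ℝ^{d_π}` by hypothesis. -/

open Filter Topology Set Metric

/-- The Painlevé–Kuratowski limsup of a sequence of sets:
points whose distance to `A n` has liminf zero. -/
def pkLimsup {H : Type*} [PseudoEMetricSpace H] (A : ℕ → Set H) : Set H :=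
  {h | Filter.atTop.liminf (fun n => EMetric.infEdist h (A n)) = 0}

/-- The Painlevé–Kuratowski liminf of a sequence of sets:
points whose distance to `A n` tends to zero. -/
def pkLiminf {H : Type*} [PseudoEMetricSpace H] (A : ℕ → Set H) : Set H :=
  {h | Tendsto (fun n => EMetric.infEdist h (A n)) atTop (𝓝 0)}

/-- Painlevé–Kuratowski convergence: limsup and liminf both equal the limit set. -/
def PKTendsto {H : Type*} [PseudoEMetricSpace H] (A : ℕ → Set H) (L : Set H) : Prop :=
  pkLimsup A = L ∧ pkLiminf A = L

section PainleveKuratowski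

variable {H : Type*} [PseudoEMetricSpace H] {A : ℕ → Set H}

theorem pkLiminf_subset_pkLimsup : pkLiminf A ⊆ pkLimsup A :=
  fun _ h => h.liminf_eq

theorem PKTendsto.of_subset_pkLiminf_of_pkLimsup_subset {L : Set H}
    (hinf : L ⊆ pkLiminf A) (hsup : pkLimsup A ⊆ L) : PKTendsto A L :=
  ⟨hsup.antisymm (hinf.trans pkLiminf_subset_pkLimsup),
    (pkLiminf_subset_pkLimsup.trans hsup).antisymm hinf⟩

theorem isClosed_pkLiminf : IsClosed (pkLiminf A) := by
  refine isClosed_of_closure_subset fun h hh => ?_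
  refine ENNReal.tendsto_nhds_zero.2 fun ε hε => ?_
  obtain ⟨h', hh', hdist⟩ := EMetric.mem_closure_iff.1 hh (ε / 2) (ENNReal.half_pos hε.ne')
  filter_upwards [ENNReal.tendsto_nhds_zero.1 hh' (ε / 2) (ENNReal.half_pos hε.ne')] with n hn
  calc infEDist h (A n) ≤ infEDist h' (A n) + edist h h' :=
        infEDist_le_infEDist_add_edist
    _ ≤ ε / 2 + ε / 2 := add_le_add hn hdist.le
    _ = ε := ENNReal.add_halves ε

theorem mem_pkLiminf_of_eventually_mem {h : H} (hA : ∀ᶠ n in atTop, h ∈ A n) :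
    h ∈ pkLiminf A :=
  tendsto_const_nhds.congr' <| hA.mono fun _ hn => (infEDist_zero_of_mem hn).symm

theorem notMem_pkLimsup_of_eventually_disjoint {h : H} {U : Set H} (hU : U ∈ 𝓝 h)
    (hA : ∀ᶠ n in atTop, Disjoint U (A n)) : h ∉ pkLimsup A := by
  obtain ⟨ε, hε, hball⟩ := EMetric.mem_nhds_iff.1 hU
  have hfar : ∀ᶠ n in atTop, ε ≤ infEDist h (A n) :=
    hA.mono fun n hn => le_infEDist.2 fun y hy =>
      not_lt.1 fun hlt => hn.ne_of_mem (hball (by rwa [mem_eball, edist_comm])) hy rfl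
  intro hlim
  have hle : ε ≤ 0 := (le_liminf_of_le (by isBoundedDefault) hfar).trans_eq hlim
  exact hε.ne' (nonpos_iff_eq_zero.1 hle)

end PainleveKuratowski

section WeakIdScaling

variable {E F : Type*} [NormedAddCommGroup F] [NormedSpace ℝ F] {Θ : Set (E × F)}
  {π₀ : F} {πn : ℕ → F}

/-- The rescaled parameter space `Λ_n^W`. -/
def weakIdScaling (Θ : Set (E × F)) (πn : ℕ → F) (n : ℕ) : Set (E × F) :=
  {p | ∃ q ∈ Θ, p = (q.1, √n • (q.2 - πn n))}

theorem mem_weakIdScaling_iff {n : ℕ} (hn : n ≠ 0) {b : E} {w : F} :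
    (b, w) ∈ weakIdScaling Θ πn n ↔ (b, πn n + (√n)⁻¹ • w) ∈ Θ := by
  have hs : √(n : ℝ) ≠ 0 := by positivity
  constructor
  · rintro ⟨q, hq, hbw⟩
    obtain ⟨rfl, rfl⟩ := Prod.mk.inj hbw
    simpa [smul_smul, inv_mul_cancel₀ hs] using hq
  · exact fun h => ⟨_, h, by simp [smul_smul, mul_inv_cancel₀ hs]⟩

theorem tendsto_weakIdUnscaling [TopologicalSpace E] (hπn : Tendsto πn atTop (𝓝 π₀))
    (x : E × F) :
    Tendsto (fun p : ℕ × (E × F) => (p.2.1, πn p.1 + (√p.1)⁻¹ • p.2.2))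
      (atTop ×ˢ 𝓝 x) (𝓝 (x.1, π₀)) := by
  have hinv : Tendsto (fun n : ℕ => (√n)⁻¹) atTop (𝓝 0) :=
    tendsto_inv_atTop_zero.comp (Real.tendsto_sqrt_atTop.comp tendsto_natCast_atTop_atTop)
  have hsnd := (continuous_snd.tendsto x).comp (tendsto_snd (f := atTop (α := ℕ)))
  have hfst := (continuous_fst.tendsto x).comp (tendsto_snd (f := atTop (α := ℕ)))
  simpa using hfst.prodMk_nhds ((hπn.comp tendsto_fst).add ((hinv.comp tendsto_fst).smul hsnd))

theorem closure_prod_univ_subset_pkLiminf_weakIdScaling [PseudoEMetricSpace E]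
    (hπn : Tendsto πn atTop (𝓝 π₀)) :
    closure {β | (β, π₀) ∈ interior Θ} ×ˢ (univ : Set F) ⊆ pkLiminf (weakIdScaling Θ πn) := by
  rw [← closure_univ, ← closure_prod_eq]
  refine isClosed_pkLiminf.closure_subset_iff.2 ?_
  rintro ⟨β, v⟩ ⟨hβ, -⟩
  have hpath : Tendsto (fun n : ℕ => (n, (β, v))) atTop (atTop ×ˢ 𝓝 (β, v)) :=
    tendsto_id.prodMk tendsto_const_nhds
  refine mem_pkLiminf_of_eventually_mem ?_
  filter_upwards [(tendsto_weakIdUnscaling hπn _).comp hpath (isOpen_interior.mem_nhds hβ),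
    eventually_ne_atTop 0] with n hn hn0
  exact (mem_weakIdScaling_iff hn0).2 (interior_subset hn)

theorem pkLimsup_weakIdScaling_subset [PseudoEMetricSpace E] (hΘ : IsClosed Θ)
    (hπn : Tendsto πn atTop (𝓝 π₀)) :
    pkLimsup (weakIdScaling Θ πn) ⊆ {β | (β, π₀) ∈ Θ} ×ˢ (univ : Set F) := by
  intro x hx
  refine ⟨?_, mem_univ _⟩
  by_contra hxΘ
  obtain ⟨S, hS, U, hU, hSU⟩ :=
    mem_prod_iff.1 (tendsto_weakIdUnscaling hπn x (hΘ.isOpen_compl.mem_nhds hxΘ))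
  refine notMem_pkLimsup_of_eventually_disjoint hU ?_ hx
  filter_upwards [hS, eventually_ne_atTop 0] with n hn hn0
  exact disjoint_left.2 fun ⟨b, w⟩ hbw hΛ =>
    hSU (mk_mem_prod hn hbw) ((mem_weakIdScaling_iff hn0).1 hΛ)

end WeakIdScaling

/-- Weak-identification scaling of the parameter space. If `Θ` is closed,
`B^W = {β : (β,π₀) ∈ Θ}` equals the closure of `{β : (β,π₀) ∈ int Θ}`, and `π_n → π₀`,
then `Λ_n^W = {(β, √n(π − π_n)) : (β,π) ∈ Θ} → B^W × ℝ^{d_π}` in the PK sense. -/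
theorem pk_weak_id_scaling {dβ dπ : ℕ}
    (Θ : Set ((Fin dβ → ℝ) × (Fin dπ → ℝ))) (hΘ : IsClosed Θ)
    (π₀ : Fin dπ → ℝ)
    (hBW : {β : Fin dβ → ℝ | (β, π₀) ∈ Θ}
      = closure {β : Fin dβ → ℝ | (β, π₀) ∈ interior Θ})
    (πn : ℕ → (Fin dπ → ℝ)) (hπn : Tendsto πn atTop (𝓝 π₀)) :
    PKTendsto
      (fun n : ℕ =>
        {p : (Fin dβ → ℝ) × (Fin dπ → ℝ) |
          ∃ q ∈ Θ, p = (q.1, Real.sqrt n • (q.2 - πn n))})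
      ({β : Fin dβ → ℝ | (β, π₀) ∈ Θ} ×ˢ (Set.univ : Set (Fin dπ → ℝ))) := by
  refine .of_subset_pkLiminf_of_pkLimsup_subset ?_ (pkLimsup_weakIdScaling_subset hΘ hπn)
  rw [hBW]
  exact closure_prod_univ_subset_pkLiminf_weakIdScaling hπn
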